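/- arXiv:2108.08541 — 5 statements merged into one kernel-verified Lean document; each statement's English description precedes it below -/
import Mathlib

section
/- Define G(n, m1, m2, k) recursively by G(0,0,0,0) = 1, G(n,m1,m2,k) = 0 whenever k < max(m1,m2) or k > min(n, m1+m2), and otherwise G(n,m1,m2,k) = (n−m1)(n−m2)·G(n−1,m1,m2,k) + m1(n−m2)·G(n−1,m1−1,m2,k−1) + (n−m1)m2·G(n−1,m1,m2−1,k−1) + m1·m2·G(n−1,m1−1,m2−1,k−1). Then for max(m1,m2) ≤ k ≤ min(n, m1+m2), setting b1 = k−m2, b2 = k−m1, b12 = m1+m2−k, we have G(n,m1,m2,k) = m1!·m2!·(n−m1)!·(n−m2)!·n! / (b1!·b2!·b12!·(n−k)!). -/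
/-!
Record a pair of permutations by the Venn diagram of its faulty positions: `b₁` are faulty only
in the first permutation, `b₂` only in the second, `b₁₂` in both and `r` in neither. Each of the
four terms of the recurrence lowers exactly one of these counts by one. Evaluated on the closed
form `C`, the term lowering the count `x` equals `x * C / (n + 1)`; since the four counts add up
to `n + 1`, the closed form satisfies the recurrence of `G`.
-/

open Nat

/-- The recursively defined count of permutation pairs with exactly `k` faulty positions. -/
def G : ℕ → ℕ → ℕ → ℕ → ℕ
  | 0, m1, m2, k => if m1 = 0 ∧ m2 = 0 ∧ k = 0 then 1 else 0
  | n + 1, m1, m2, k =>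
      if k < max m1 m2 ∨ min (n + 1) (m1 + m2) < k then 0
      else (n + 1 - m1) * (n + 1 - m2) * G n m1 m2 k
        + m1 * (n + 1 - m2) * G n (m1 - 1) m2 (k - 1)
        + (n + 1 - m1) * m2 * G n m1 (m2 - 1) (k - 1)
        + m1 * m2 * G n (m1 - 1) (m2 - 1) (k - 1)

lemma G_eq_zero {n m1 m2 k : ℕ} (h : k < max m1 m2 ∨ min n (m1 + m2) < k) :
    G n m1 m2 k = 0 := by
  cases n with
  | zero => simp only [G]; rw [if_neg (by omega)]
  | succ n => simp only [G]; rw [if_pos h]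

lemma G_comm (n m1 m2 k : ℕ) : G n m1 m2 k = G n m2 m1 k := by
  induction n generalizing m1 m2 k with
  | zero => simp only [G]; congr 1; simp only [_root_.and_left_comm]
  | succ n ih => simp only [G, ih, max_comm m1 m2, add_comm m1 m2]; ring_nf

/-- The closed form, in the coordinates `m1 = b₁ + b₁₂`, `m2 = b₂ + b₁₂`, `k = b₁ + b₂ + b₁₂`,
`n = k + r`. -/
def C (b₁ b₂ b₁₂ r : ℕ) : ℚ :=
  ((b₁ + b₁₂)! * (b₂ + b₁₂)! * (b₂ + r)! * (b₁ + r)! * (b₁ + b₂ + b₁₂ + r)! : ℚ)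
    / (b₁ ! * b₂ ! * b₁₂ ! * r !)

lemma C_comm (b₁ b₂ b₁₂ r : ℕ) : C b₁ b₂ b₁₂ r = C b₂ b₁ b₁₂ r := by
  unfold C
  rw [add_comm b₂ b₁]
  ring

lemma mul_C_succ_neither (b₁ b₂ b₁₂ r : ℕ) :
    (r + 1 : ℚ) * C b₁ b₂ b₁₂ (r + 1)
      = (b₂ + r + 1) * (b₁ + r + 1) * (b₁ + b₂ + b₁₂ + r + 1) * C b₁ b₂ b₁₂ r := by
  unfold C
  simp only [← add_assoc, factorial_succ]
  push_cast
  field_simp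

lemma mul_C_succ_left (b₁ b₂ b₁₂ r : ℕ) :
    (b₁ + 1 : ℚ) * C (b₁ + 1) b₂ b₁₂ r
      = (b₁ + b₁₂ + 1) * (b₁ + r + 1) * (b₁ + b₂ + b₁₂ + r + 1) * C b₁ b₂ b₁₂ r := by
  unfold C
  rw [show b₁ + 1 + b₁₂ = b₁ + b₁₂ + 1 by ring, show b₁ + 1 + r = b₁ + r + 1 by ring,
    show b₁ + 1 + b₂ + b₁₂ + r = b₁ + b₂ + b₁₂ + r + 1 by ring]
  simp only [factorial_succ]
  push_cast
  field_simp

lemma mul_C_succ_both (b₁ b₂ b₁₂ r : ℕ) :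
    (b₁₂ + 1 : ℚ) * C b₁ b₂ (b₁₂ + 1) r
      = (b₁ + b₁₂ + 1) * (b₂ + b₁₂ + 1) * (b₁ + b₂ + b₁₂ + r + 1) * C b₁ b₂ b₁₂ r := by
  unfold C
  rw [show b₁ + b₂ + (b₁₂ + 1) + r = b₁ + b₂ + b₁₂ + r + 1 by ring]
  simp only [← add_assoc, factorial_succ]
  push_cast
  field_simp

def ClosedFormHolds (N : ℕ) : Prop :=
  ∀ b₁ b₂ b₁₂ r, b₁ + b₂ + b₁₂ + r = N →
    (G N (b₁ + b₁₂) (b₂ + b₁₂) (b₁ + b₂ + b₁₂) : ℚ) = C b₁ b₂ b₁₂ r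

section RecurrenceTerms

variable {N b₁ b₂ b₁₂ r : ℕ}

lemma term_neither (ih : ClosedFormHolds N) (hN : b₁ + b₂ + b₁₂ + r = N + 1) :
    (N + 1 : ℚ) * ((b₂ + r) * (b₁ + r) * G N (b₁ + b₁₂) (b₂ + b₁₂) (b₁ + b₂ + b₁₂))
      = r * C b₁ b₂ b₁₂ r := by
  cases r with
  | zero =>
    rw [G_eq_zero]
    · simp
    · omega
  | succ r =>
    obtain rfl : N = b₁ + b₂ + b₁₂ + r := by omega
    rw [ih b₁ b₂ b₁₂ r rfl]
    push_cast
    linear_combination -(mul_C_succ_neither b₁ b₂ b₁₂ r)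

lemma term_left (ih : ClosedFormHolds N) (hN : b₁ + b₂ + b₁₂ + r = N + 1) :
    (N + 1 : ℚ) * ((b₁ + b₁₂) * (b₁ + r) * G N (b₁ + b₁₂ - 1) (b₂ + b₁₂) (b₁ + b₂ + b₁₂ - 1))
      = b₁ * C b₁ b₂ b₁₂ r := by
  cases b₁ with
  | zero =>
    rcases Nat.eq_zero_or_pos b₁₂ with rfl | h
    · simp
    rw [G_eq_zero]
    · simp
    · omega
  | succ b₁ =>
    obtain rfl : N = b₁ + b₂ + b₁₂ + r := by omega
    rw [show b₁ + 1 + b₁₂ - 1 = b₁ + b₁₂ by omega,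
      show b₁ + 1 + b₂ + b₁₂ - 1 = b₁ + b₂ + b₁₂ by omega, ih b₁ b₂ b₁₂ r rfl]
    push_cast
    linear_combination -(mul_C_succ_left b₁ b₂ b₁₂ r)

lemma term_right (ih : ClosedFormHolds N) (hN : b₁ + b₂ + b₁₂ + r = N + 1) :
    (N + 1 : ℚ) * ((b₂ + r) * (b₂ + b₁₂) * G N (b₁ + b₁₂) (b₂ + b₁₂ - 1) (b₁ + b₂ + b₁₂ - 1))
      = b₂ * C b₁ b₂ b₁₂ r := by
  have := term_left (b₁ := b₂) (b₂ := b₁) (b₁₂ := b₁₂) (r := r) ih (by omega)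
  rw [G_comm, C_comm, add_comm b₂ b₁] at this
  linear_combination this

lemma term_both (ih : ClosedFormHolds N) (hN : b₁ + b₂ + b₁₂ + r = N + 1) :
    (N + 1 : ℚ) * ((b₁ + b₁₂) * (b₂ + b₁₂)
        * G N (b₁ + b₁₂ - 1) (b₂ + b₁₂ - 1) (b₁ + b₂ + b₁₂ - 1))
      = b₁₂ * C b₁ b₂ b₁₂ r := by
  cases b₁₂ with
  | zero =>
    rcases Nat.eq_zero_or_pos b₁ with rfl | h₁
    · simp
    rcases Nat.eq_zero_or_pos b₂ with rfl | h₂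
    · simp
    rw [G_eq_zero]
    · simp
    · omega
  | succ b₁₂ =>
    obtain rfl : N = b₁ + b₂ + b₁₂ + r := by omega
    rw [show b₁ + (b₁₂ + 1) - 1 = b₁ + b₁₂ by omega, show b₂ + (b₁₂ + 1) - 1 = b₂ + b₁₂ by omega,
      show b₁ + b₂ + (b₁₂ + 1) - 1 = b₁ + b₂ + b₁₂ by omega, ih b₁ b₂ b₁₂ r rfl]
    push_cast
    linear_combination -(mul_C_succ_both b₁ b₂ b₁₂ r)

end RecurrenceTerms

theorem closedFormHolds (N : ℕ) : ClosedFormHolds N := by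
  induction N with
  | zero =>
    intro b₁ b₂ b₁₂ r h
    obtain ⟨rfl, rfl, rfl, rfl⟩ : b₁ = 0 ∧ b₂ = 0 ∧ b₁₂ = 0 ∧ r = 0 := by omega
    simp [G, C]
  | succ N ih =>
    intro b₁ b₂ b₁₂ r hN
    have hNq : (b₁ + b₂ + b₁₂ + r : ℚ) = N + 1 := by exact_mod_cast hN
    rw [G, if_neg (by omega), show N + 1 - (b₁ + b₁₂) = b₂ + r by omega,
      show N + 1 - (b₂ + b₁₂) = b₁ + r by omega]
    push_cast
    refine mul_left_cancel₀ (by positivity : (N + 1 : ℚ) ≠ 0) ?_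
    linear_combination term_neither ih hN + term_left ih hN + term_right ih hN + term_both ih hN
      + C b₁ b₂ b₁₂ r * hNq

theorem stmt_2_general (n m1 m2 k : ℕ)
    (hk₁ : max m1 m2 ≤ k) (hk₂ : k ≤ min n (m1 + m2)) :
    (G n m1 m2 k : ℚ)
      = (m1 ! * m2 ! * (n - m1)! * (n - m2)! * n ! : ℚ)
        / ((k - m2)! * (k - m1)! * (m1 + m2 - k)! * (n - k)!) := by
  obtain ⟨b₁, b₂, b₁₂, r, rfl, rfl, rfl, rfl⟩ : ∃ b₁ b₂ b₁₂ r,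
      n = b₁ + b₂ + b₁₂ + r ∧ m1 = b₁ + b₁₂ ∧ m2 = b₂ + b₁₂ ∧ k = b₁ + b₂ + b₁₂ :=
    ⟨k - m2, k - m1, m1 + m2 - k, n - k, by omega, by omega, by omega, by omega⟩
  rw [closedFormHolds _ b₁ b₂ b₁₂ r rfl, C]
  congr <;> omega

/-- Closed form for `G`. -/
theorem stmt_2 (n m1 m2 k : ℕ) (hm1 : m1 ≤ n) (hm2 : m2 ≤ n)
    (hk₁ : max m1 m2 ≤ k) (hk₂ : k ≤ min n (m1 + m2)) :
    (G n m1 m2 k : ℚ)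
      = (m1 ! * m2 ! * (n - m1)! * (n - m2)! * n ! : ℚ)
        / ((k - m2)! * (k - m1)! * (m1 + m2 - k)! * (n - k)!) :=
  stmt_2_general n m1 m2 k hk₁ hk₂
end

section
/- For every natural number f, (f!² / (2f)!) · (Σ_{k=0}^{f} C(f+1,k)²) = 4 − 2/(f+1) − f!²/(2f)!, where the identity is over the rational numbers. -/
open Nat Finset

/-!
By Vandermonde, `∑_{k ≤ f} C(f+1,k)² = C(2f+2, f+1) - 1`, and `f!²/(2f)!` is the reciprocal of the
central binomial coefficient `C(2f, f)`. The identity thus reduces to the ratio of consecutive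
central binomial coefficients, `C(2f+2, f+1) / C(2f, f) = 2(2f+1)/(f+1) = 4 - 2/(f+1)`.
-/

namespace Nat

theorem cast_factorial_sq_div_factorial_two_mul {K : Type*} [DivisionRing K] [CharZero K]
    (n : ℕ) : (n ! : K) ^ 2 / (2 * n)! = (centralBinom n : K)⁻¹ := by
  rw [centralBinom_eq_two_mul_choose, cast_choose K (by omega : n ≤ 2 * n),
    show 2 * n - n = n by omega, inv_div, sq]

theorem sum_range_choose_succ_sq_add_one (n : ℕ) :
    ∑ k ∈ range (n + 1), (n + 1).choose k ^ 2 + 1 = centralBinom (n + 1) := by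
  rw [centralBinom_eq_two_mul_choose, ← sum_range_choose_sq, sum_range_succ (n := n + 1),
    choose_self, one_pow]

theorem cast_centralBinom_succ_div {K : Type*} [Field K] [CharZero K] (n : ℕ) :
    (centralBinom (n + 1) : K) / centralBinom n = 4 - 2 / ((n : K) + 1) := by
  have hrec : ((n : K) + 1) * centralBinom (n + 1) = 2 * (2 * n + 1) * centralBinom n := by
    exact_mod_cast succ_mul_centralBinom_succ n
  have hC : (centralBinom n : K) ≠ 0 := cast_ne_zero.mpr (centralBinom_ne_zero n)
  have hn : (n : K) + 1 ≠ 0 := cast_add_one_ne_zero n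
  field_simp
  linear_combination hrec

end Nat

/-- `(f!²/(2f)!) · Σ_{k=0}^{f} C(f+1,k)² = 4 − 2/(f+1) − f!²/(2f)!` over ℚ. -/
theorem stmt_4 (f : ℕ) :
    ((f ! : ℚ) ^ 2 / ((2 * f)! : ℚ))
        * (∑ k ∈ Finset.range (f + 1), ((f + 1).choose k : ℚ) ^ 2)
      = 4 - 2 / ((f : ℚ) + 1) - (f ! : ℚ) ^ 2 / ((2 * f)! : ℚ) := by
  have hsum : ∑ k ∈ range (f + 1), ((f + 1).choose k : ℚ) ^ 2 = centralBinom (f + 1) - 1 := by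
    rw [← sum_range_choose_succ_sq_add_one]
    push_cast
    ring
  rw [hsum, cast_factorial_sq_div_factorial_two_mul, ← cast_centralBinom_succ_div]
  ring
end

section
/- For natural numbers n, m1, m2 with m1 + m2 < n, Σ_{k=max(m1,m2)}^{m1+m2} G(n,m1,m2,k) = n!², where G(n,m1,m2,k) = m1!·m2!·(n−m1)!·(n−m2)!·n!/((k−m2)!·(k−m1)!·(m1+m2−k)!·(n−k)!). -/
/-! Each summand is `n! · m1! · (n−m1)! · C(m2, k−m1) · C(n−m2, n−k)`, so the sum is
`n! · m1! · (n−m1)! · C(n, m1) = n!²` by Vandermonde's identity. -/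

open Nat Finset

theorem sum_Icc_choose_mul_choose {n m1 m2 : ℕ} (h : m1 + m2 ≤ n) :
    ∑ k ∈ Icc (max m1 m2) (m1 + m2), m2.choose (k - m1) * (n - m2).choose (n - k)
      = n.choose m1 := by
  have vandermonde := Nat.add_choose_eq m2 (n - m2) (n - m1)
  rw [Nat.add_sub_cancel' (by omega), choose_symm (by omega)] at vandermonde
  rw [vandermonde]
  refine sum_bij_ne_zero (fun k _ _ => (k - m1, n - k)) ?_ ?_ ?_ (fun _ _ _ => rfl)
  · intro k hk _
    simp only [mem_Icc] at hk
    simp only [HasAntidiagonal.mem_antidiagonal]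
    omega
  · intro k₁ hk₁ _ k₂ hk₂ _ heq
    simp only [mem_Icc, Prod.mk.injEq] at hk₁ hk₂ heq
    omega
  · rintro ⟨i, j⟩ hij hne
    simp only [HasAntidiagonal.mem_antidiagonal] at hij
    obtain ⟨hi, hj⟩ := mul_ne_zero_iff.mp hne
    rw [Ne, choose_eq_zero_iff, not_lt] at hi hj
    refine ⟨m1 + i, by simp only [mem_Icc]; omega, ?_, ?_⟩
    · rwa [Nat.add_sub_cancel_left, show n - (m1 + i) = j by omega]
    · simp only [Prod.mk.injEq]; omega

theorem factorial_div_eq_mul_choose_mul_choose {n m1 m2 k : ℕ} (h : m1 + m2 ≤ n)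
    (hk : k ∈ Icc (max m1 m2) (m1 + m2)) :
    (m1 ! * m2 ! * (n - m1)! * (n - m2)! * n ! : ℚ)
        / ((k - m2)! * (k - m1)! * (m1 + m2 - k)! * (n - k)!)
      = n ! * m1 ! * (n - m1)! * (m2.choose (k - m1) * (n - m2).choose (n - k) : ℕ) := by
  simp only [mem_Icc, max_le_iff] at hk
  rw [Nat.cast_mul, cast_choose ℚ (by omega : k - m1 ≤ m2),
    cast_choose ℚ (by omega : n - k ≤ n - m2),
    show m2 - (k - m1) = m1 + m2 - k by omega, show n - m2 - (n - k) = k - m2 by omega]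
  field_simp

/-- For `m1 + m2 < n`, summing the closed form
`G(n,m1,m2,k) = m1!·m2!·(n−m1)!·(n−m2)!·n!/((k−m2)!·(k−m1)!·(m1+m2−k)!·(n−k)!)` over
`k = max(m1,m2), …, m1+m2` yields `n!²`. -/
theorem stmt_14 (n m1 m2 : ℕ) (h : m1 + m2 < n) :
    ∑ k ∈ Finset.Icc (max m1 m2) (m1 + m2),
        (m1 ! * m2 ! * (n - m1)! * (n - m2)! * n ! : ℚ)
          / ((k - m2)! * (k - m1)! * (m1 + m2 - k)! * (n - k)!)
      = ((n ! : ℚ)) ^ 2 := by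
  rw [sum_congr rfl fun k hk => factorial_div_eq_mul_choose_mul_choose h.le hk, ← mul_sum,
    ← Nat.cast_sum, sum_Icc_choose_mul_choose h.le, cast_choose ℚ (by omega : m1 ≤ n)]
  field_simp
end

section
/- Let n2 ≤ n1, q = n1 div n2, r = n1 mod n2, and suppose a cluster C2 of size n2 has f2 faulty replicas with n2 > 3·f2. Form the list S2 of length n1 by repeating the canonical list of C2 (q full copies followed by its first r elements). Then the number f(S2) of faulty entries in S2 satisfies n1 > 2·f(S2). -/
/-! Writing `n1 = q·n2 + r`, the list `S2` contains every faulty replica of `C2` exactly `q` times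
plus `t` more faulty entries in the remainder block, where `t` is at most both `f2` and `r`.
Since `q ≥ 1` and `n2 ≥ 3·f2 + 1`, we get `n1 ≥ 3·q·f2 + q + r > 2·q·f2 + 2·t`. -/

theorem List.countP_flatten_replicate_append_take {α : Type*} (p : α → Bool) (L : List α)
    (q r : ℕ) :
    ((List.replicate q L).flatten ++ L.take r).countP p = q * L.countP p + (L.take r).countP p := by
  simp [List.countP_flatten]

theorem two_mul_add_lt_mul_add_of_three_mul_lt {n f q r t : ℕ} (hn : 3 * f < n) (hq : 1 ≤ q)
    (htf : t ≤ f) (htr : t ≤ r) : 2 * (q * f + t) < q * n + r := by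
  nlinarith

theorem stmt_15_general {α : Type*} [DecidableEq α] (L : List α) (F : Finset α)
    (n1 n2 f2 : ℕ) (hlen : L.length = n2)
    (hf : (L.filter (· ∈ F)).length = f2)
    (h12 : n2 ≤ n1) (hrob : n2 > 3 * f2) :
    n1 > 2 * (((List.flatten (List.replicate (n1 / n2) L) ++ L.take (n1 % n2)).filter
        (· ∈ F)).length) := by
  rw [← List.countP_eq_length_filter] at hf ⊢
  rw [List.countP_flatten_replicate_append_take, hf]
  have hq : 1 ≤ n1 / n2 := (Nat.one_le_div_iff (by omega)).mpr h12
  have htf : (L.take (n1 % n2)).countP (· ∈ F) ≤ f2 :=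
    hf ▸ (L.take_sublist _).countP_le
  have htr : (L.take (n1 % n2)).countP (· ∈ F) ≤ n1 % n2 :=
    List.countP_le_length.trans (by simp [hlen])
  calc 2 * (n1 / n2 * f2 + (L.take (n1 % n2)).countP (· ∈ F))
      < n1 / n2 * n2 + n1 % n2 := two_mul_add_lt_mul_add_of_three_mul_lt hrob hq htf htr
    _ = n1 := Nat.div_add_mod' n1 n2

/-- Let `L` be the canonical duplicate-free list of a cluster of size `n2` with `f2`
faulty replicas (faulty set `F`), and `n2 > 3·f2`, `n2 ≤ n1`. Form `S2` of length `n1`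
by repeating `L` (`n1/n2` full copies followed by the first `n1 % n2` elements).
Then the number of faulty entries `f(S2)` of `S2` satisfies `n1 > 2·f(S2)`. -/
theorem stmt_15 {α : Type*} [DecidableEq α] (L : List α) (F : Finset α)
    (n1 n2 f2 : ℕ) (hlen : L.length = n2) (hnd : L.Nodup)
    (hf : (L.filter (· ∈ F)).length = f2)
    (h12 : n2 ≤ n1) (hrob : n2 > 3 * f2) :
    n1 > 2 * (((List.flatten (List.replicate (n1 / n2) L) ++ L.take (n1 % n2)).filter
        (· ∈ F)).length) :=
  stmt_15_general L F n1 n2 f2 hlen hf h12 hrob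
end

section
/- For every natural number f ≥ 1, (2f+1)²/(f+1)² < 4 − 2/(f+1) − f!²/(2f)!, i.e., the expected number of cluster-sending steps of Pcs (geometric with success probability ((f+1)/(2f+1))²) is strictly less than the expected number of steps PT(2f+1,f,f) of Plcs, when all clusters have n = 2f+1 replicas of which f are faulty. -/
/-!
Since `4 - 2/(f+1) - (2f+1)²/(f+1)² = (2f+1)/(f+1)²`, the claim is `f!²/(2f)! < (2f+1)/(f+1)²`,
i.e. `(f+1)!² < (2f+1)!`. Dividing by `f! (f+1)!` this becomes `f + 1 < C(2f+1, f+1)`, and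
already `C(f+2, f+1) = f + 2`.
-/

open Nat

theorem Nat.succ_lt_choose_two_mul_add_one {f : ℕ} (hf : 1 ≤ f) :
    f + 1 < (2 * f + 1).choose (f + 1) :=
  calc f + 1 < (f + 1) + 1 := lt_add_one _
    _ = (f + 2).choose (f + 1) := (choose_succ_self_right (f + 1)).symm
    _ ≤ (2 * f + 1).choose (f + 1) := choose_le_choose _ (by omega)

theorem Nat.factorial_succ_sq_lt_factorial_two_mul_add_one {f : ℕ} (hf : 1 ≤ f) :
    (f + 1)! ^ 2 < (2 * f + 1)! := by
  have hchoose : (2 * f + 1).choose (f + 1) * f ! * (f + 1)! = (2 * f + 1)! := by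
    rw [show 2 * f + 1 = f + (f + 1) by ring]
    exact add_choose_mul_factorial_mul_factorial f (f + 1)
  calc (f + 1)! ^ 2 = (f + 1) * f ! * (f + 1)! := by rw [factorial_succ]; ring
    _ < (2 * f + 1).choose (f + 1) * f ! * (f + 1)! := by
      gcongr
      exact succ_lt_choose_two_mul_add_one hf
    _ = (2 * f + 1)! := hchoose

theorem factorial_sq_div_factorial_two_mul_lt {f : ℕ} (hf : 1 ≤ f) :
    (f ! : ℚ) ^ 2 / ((2 * f)! : ℚ) < (2 * f + 1) / (f + 1) ^ 2 := by
  have key : ((f + 1)! ^ 2 : ℚ) < (2 * f + 1)! := by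
    exact_mod_cast factorial_succ_sq_lt_factorial_two_mul_add_one hf
  rw [factorial_succ, factorial_succ] at key
  push_cast at key
  rw [div_lt_div_iff₀ (by positivity) (by positivity)]
  linarith

/-- For `f ≥ 1`, the expected number of steps of Pcs, `(2f+1)²/(f+1)²`, is strictly
less than the expected number of steps of Plcs, `4 − 2/(f+1) − f!²/(2f)!`. -/
theorem stmt_17 (f : ℕ) (hf : 1 ≤ f) :
    ((2 * (f : ℚ) + 1) ^ 2) / (((f : ℚ) + 1) ^ 2)
      < 4 - 2 / ((f : ℚ) + 1) - (f ! : ℚ) ^ 2 / ((2 * f)! : ℚ) := by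
  have hgap : 4 - 2 / ((f : ℚ) + 1) - (2 * (f : ℚ) + 1) ^ 2 / ((f : ℚ) + 1) ^ 2
      = (2 * f + 1) / (f + 1) ^ 2 := by
    field_simp
    ring
  linarith [factorial_sq_div_factorial_two_mul_lt hf]
end
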